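/- Let m, n be positive integers and h a norm on ℝ^m. Let M ∈ ℝ^{m×n} satisfy h_*(M u) ≤ |u| for all u ∈ ℝ^n. Let (θ_a, e_a)_{a ∈ A} and (θ_b, e_b)_{b ∈ B} be finite families with θ_a, θ_b ∈ ℝ^m and e_a, e_b ∈ ℝ^n unit vectors such that θ_c · (M e_c) = h(θ_c) for all c ∈ A ∪ B, and suppose mass conservation Σ_{a ∈ A} θ_a = Σ_{b ∈ B} θ_b holds. Then the momentum conservation law Σ_{a ∈ A} h(θ_a) e_a = Σ_{b ∈ B} h(θ_b) e_b holds. -/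

import Mathlib

open MeasureTheory

noncomputable section

/-- `ℝ^n` with the Euclidean norm. -/
abbrev Euc (n : ℕ) := EuclideanSpace ℝ (Fin n)

/-- `h` is a norm on `ℝ^m`. -/
def IsNorm {m : ℕ} (h : (Fin m → ℝ) → ℝ) : Prop :=
  (∀ x y, h (x + y) ≤ h x + h y) ∧ (∀ (c : ℝ) (x), h (c • x) = |c| * h x) ∧
    ∀ x, h x = 0 → x = 0

/-- The dual norm `h_*` of `h`: `h_*(g) = sup { g·θ : h θ ≤ 1 }`. -/
def dualNorm {m : ℕ} (h : (Fin m → ℝ) → ℝ) (g : Fin m → ℝ) : ℝ :=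
  sSup {r | ∃ θ : Fin m → ℝ, h θ ≤ 1 ∧ r = ∑ i, g i * θ i}

/-- Matrix-vector product `M u`. -/
def matVec {m n : ℕ} (M : Fin m → Fin n → ℝ) (u : Euc n) : Fin m → ℝ :=
  fun i => ∑ j, M i j * u j

/-- Frobenius inner product `M : N`. -/
def frob {m n : ℕ} (M N : Fin m → Fin n → ℝ) : ℝ := ∑ i, ∑ j, M i j * N i j

/-- `M ∈ ∂H(0)`, i.e. `h_*(M u) ≤ 1` for all `|u| ≤ 1`. -/
def inSubdiffH {m n : ℕ} (h : (Fin m → ℝ) → ℝ) (M : Fin m → Fin n → ℝ) : Prop :=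
  ∀ u : Euc n, ‖u‖ ≤ 1 → dualNorm h (matVec M u) ≤ 1

/-- The norm `H` on `ℝ^{m×n}` generated by `h`:
`H(N) = sup { M:N : M ∈ ∂H(0) }`. -/
def genNorm {m n : ℕ} (h : (Fin m → ℝ) → ℝ) (N : Fin m → Fin n → ℝ) : ℝ :=
  sSup {r | ∃ M : Fin m → Fin n → ℝ, inSubdiffH h M ∧ r = frob M N}

/-- The rank-one matrix `θ ⊗ e`. -/
def outer {m n : ℕ} (θ : Fin m → ℝ) (e : Euc n) : Fin m → Fin n → ℝ :=
  fun i j => θ i * e j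

/-!
For a calibrated edge `(θ, e)` the linear functional `u ↦ θ · M u = ⟪Mᵀθ, u⟫` is bounded by
`h(θ) |u|`, because `θ · g ≤ h(θ) h_*(g)` and `h_*(M u) ≤ |u|`, and it attains this bound at the
unit vector `e`. Equality in Cauchy–Schwarz then forces `Mᵀθ = h(θ) e`. Summing over the edges,
`Σ_a h(θ_a) e_a = Mᵀ (Σ_a θ_a) = Mᵀ (Σ_b θ_b) = Σ_b h(θ_b) e_b` by mass conservation.
-/

open Set Matrix RealInnerProductSpace Metric

namespace IsNorm

variable {m : ℕ} {h : (Fin m → ℝ) → ℝ}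

theorem map_zero (hh : IsNorm h) : h 0 = 0 := by
  simpa using hh.2.1 0 0

theorem nonneg (hh : IsNorm h) (x : Fin m → ℝ) : 0 ≤ h x := by
  have h_neg : h (-x) = h x := by simpa using hh.2.1 (-1) x
  have := hh.1 x (-x)
  rw [add_neg_cancel, hh.map_zero, h_neg] at this
  linarith

theorem convexOn (hh : IsNorm h) : ConvexOn ℝ univ h := by
  refine ⟨convex_univ, fun x _ y _ a b ha hb _ => ?_⟩
  calc h (a • x + b • y) ≤ h (a • x) + h (b • y) := hh.1 _ _
    _ = a * h x + b * h y := by rw [hh.2.1, hh.2.1, abs_of_nonneg ha, abs_of_nonneg hb]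

theorem continuous (hh : IsNorm h) : Continuous h :=
  hh.convexOn.locallyLipschitz.continuous

theorem exists_pos_mul_norm_le (hh : IsNorm h) : ∃ c > 0, ∀ x, c * ‖x‖ ≤ h x := by
  rcases subsingleton_or_nontrivial (Fin m → ℝ) with _ | _
  · exact ⟨1, one_pos, fun x => by simp [Subsingleton.elim x 0, hh.map_zero]⟩
  obtain ⟨x₀, hx₀, hmin⟩ := (isCompact_sphere (0 : Fin m → ℝ) 1).exists_isMinOn
    (NormedSpace.sphere_nonempty.mpr zero_le_one) hh.continuous.continuousOn
  have hx₀ : ‖x₀‖ = 1 := by simpa using hx₀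
  have hpos : 0 < h x₀ := (hh.nonneg x₀).lt_of_ne fun h0 => by
    simp [hh.2.2 x₀ h0.symm] at hx₀
  refine ⟨h x₀, hpos, fun x => ?_⟩
  rcases eq_or_ne x 0 with rfl | hx
  · simp [hh.map_zero]
  have hnx : 0 < ‖x‖ := norm_pos_iff.mpr hx
  have hunit : ‖x‖⁻¹ • x ∈ sphere (0 : Fin m → ℝ) 1 := by
    simp [norm_smul, hnx.ne']
  have : h x₀ ≤ h (‖x‖⁻¹ • x) := hmin hunit
  rw [hh.2.1, abs_of_pos (inv_pos.mpr hnx), le_inv_mul_iff₀ hnx] at this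
  linarith

theorem bddAbove_dotProduct (hh : IsNorm h) (g : Fin m → ℝ) :
    BddAbove {r | ∃ θ : Fin m → ℝ, h θ ≤ 1 ∧ r = ∑ i, g i * θ i} := by
  obtain ⟨c, hc, hlow⟩ := hh.exists_pos_mul_norm_le
  refine ⟨(∑ i, |g i|) * c⁻¹, ?_⟩
  rintro _ ⟨θ, hθ, rfl⟩
  have hθc : ‖θ‖ ≤ c⁻¹ := by
    rw [← one_div, le_div_iff₀ hc, mul_comm]
    exact (hlow θ).trans hθ
  rw [Finset.sum_mul]
  refine Finset.sum_le_sum fun i _ => ?_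
  calc g i * θ i ≤ |g i| * |θ i| := by rw [← abs_mul]; exact le_abs_self _
    _ ≤ |g i| * c⁻¹ := by
      gcongr
      exact (norm_le_pi_norm θ i).trans hθc

theorem dotProduct_le_mul_dualNorm (hh : IsNorm h) (g θ : Fin m → ℝ) :
    g ⬝ᵥ θ ≤ h θ * dualNorm h g := by
  rcases (hh.nonneg θ).eq_or_lt with hθ | hθ
  · obtain rfl := hh.2.2 θ hθ.symm
    simp [hh.map_zero]
  have hmem : (h θ)⁻¹ * (g ⬝ᵥ θ) ∈
      {r | ∃ θ' : Fin m → ℝ, h θ' ≤ 1 ∧ r = ∑ i, g i * θ' i} := by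
    refine ⟨(h θ)⁻¹ • θ, ?_, ?_⟩
    · rw [hh.2.1, abs_of_pos (inv_pos.mpr hθ), inv_mul_cancel₀ hθ.ne']
    · exact (dotProduct_smul (h θ)⁻¹ g θ).symm
  have := le_csSup (hh.bddAbove_dotProduct g) hmem
  rwa [inv_mul_le_iff₀ hθ] at this

end IsNorm

theorem eq_smul_of_inner_le_mul_norm {E : Type*} [NormedAddCommGroup E] [InnerProductSpace ℝ E]
    {g e : E} {k : ℝ} (he : ‖e‖ = 1) (hle : ∀ u, ⟪g, u⟫ ≤ k * ‖u‖) (heq : ⟪g, e⟫ = k) :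
    g = k • e := by
  rcases eq_or_ne g 0 with rfl | hg
  · simp [← heq]
  have hgk : ‖g‖ = k := by
    have hk_le : k ≤ ‖g‖ := by simpa [heq, he] using real_inner_le_norm g e
    have hsq : ‖g‖ * ‖g‖ ≤ k * ‖g‖ := by simpa [sq] using hle g
    exact le_antisymm (le_of_mul_le_mul_right hsq (norm_pos_iff.mpr hg)) hk_le
  have := inner_eq_norm_mul_iff_real.mp (by rw [heq, he, hgk, mul_one])
  rwa [he, one_smul, hgk] at this

section Calibration

variable {m n : ℕ} {h : (Fin m → ℝ) → ℝ} {M : Fin m → Fin n → ℝ}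

theorem inner_toLp_vecMul (θ : Fin m → ℝ) (u : Euc n) :
    ⟪WithLp.toLp 2 (θ ᵥ* of M), u⟫ = θ ⬝ᵥ matVec M u := by
  rw [EuclideanSpace.inner_eq_star_dotProduct, star_trivial, dotProduct_comm]
  exact (dotProduct_mulVec θ (of M) u.ofLp).symm

theorem toLp_vecMul_eq_smul_of_calibrated (hh : IsNorm h)
    (hM : ∀ u : Euc n, dualNorm h (matVec M u) ≤ ‖u‖) {θ : Fin m → ℝ} {e : Euc n}
    (he : ‖e‖ = 1) (hcal : θ ⬝ᵥ matVec M e = h θ) :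
    WithLp.toLp 2 (θ ᵥ* of M) = h θ • e := by
  refine eq_smul_of_inner_le_mul_norm he (fun u => ?_) (by rw [inner_toLp_vecMul, hcal])
  calc ⟪WithLp.toLp 2 (θ ᵥ* of M), u⟫ = matVec M u ⬝ᵥ θ := by
        rw [inner_toLp_vecMul, dotProduct_comm]
    _ ≤ h θ * dualNorm h (matVec M u) := hh.dotProduct_le_mul_dualNorm _ _
    _ ≤ h θ * ‖u‖ := by gcongr; exacts [hh.nonneg θ, hM u]

theorem sum_smul_eq_toLp_sum_vecMul (hh : IsNorm h)
    (hM : ∀ u : Euc n, dualNorm h (matVec M u) ≤ ‖u‖) {ι : Type*} (s : Finset ι)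
    {θ : ι → Fin m → ℝ} {e : ι → Euc n} (he : ∀ i, ‖e i‖ = 1)
    (hcal : ∀ i, θ i ⬝ᵥ matVec M (e i) = h (θ i)) :
    ∑ i ∈ s, h (θ i) • e i = WithLp.toLp 2 ((∑ i ∈ s, θ i) ᵥ* of M) := by
  simp only [sum_vecMul, WithLp.toLp_sum, toLp_vecMul_eq_smul_of_calibrated hh hM (he _) (hcal _)]

end Calibration

theorem statement11_general {m n : ℕ}
    (h : (Fin m → ℝ) → ℝ) (hh : IsNorm h)
    (M : Fin m → Fin n → ℝ) (hM : ∀ u : Euc n, dualNorm h (matVec M u) ≤ ‖u‖)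
    {α β : Type} [Fintype α] [Fintype β]
    (θa : α → Fin m → ℝ) (ea : α → Euc n) (θb : β → Fin m → ℝ) (eb : β → Euc n)
    (hea : ∀ a, ‖ea a‖ = 1) (heb : ∀ b, ‖eb b‖ = 1)
    (hca : ∀ a, ∑ i, θa a i * matVec M (ea a) i = h (θa a))
    (hcb : ∀ b, ∑ i, θb b i * matVec M (eb b) i = h (θb b))
    (hmass : ∑ a, θa a = ∑ b, θb b) :
    ∑ a, h (θa a) • ea a = ∑ b, h (θb b) • eb b := by
  rw [sum_smul_eq_toLp_sum_vecMul hh hM _ hea hca, sum_smul_eq_toLp_sum_vecMul hh hM _ heb hcb,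
    hmass]

/-- momentum conservation: if `M` satisfies `h_*(Mu) ≤ |u|` for all `u`
and finite families of incoming/outgoing edges `(θ_a, e_a)`, `(θ_b, e_b)` with unit
directions satisfy `θ_c · (M e_c) = h(θ_c)` and mass conservation `Σ_a θ_a = Σ_b θ_b`,
then `Σ_a h(θ_a) e_a = Σ_b h(θ_b) e_b`. -/
theorem statement11 {m n : ℕ} (hm : 0 < m) (hn : 0 < n)
    (h : (Fin m → ℝ) → ℝ) (hh : IsNorm h)
    (M : Fin m → Fin n → ℝ) (hM : ∀ u : Euc n, dualNorm h (matVec M u) ≤ ‖u‖)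
    {α β : Type} [Fintype α] [Fintype β]
    (θa : α → Fin m → ℝ) (ea : α → Euc n) (θb : β → Fin m → ℝ) (eb : β → Euc n)
    (hea : ∀ a, ‖ea a‖ = 1) (heb : ∀ b, ‖eb b‖ = 1)
    (hca : ∀ a, ∑ i, θa a i * matVec M (ea a) i = h (θa a))
    (hcb : ∀ b, ∑ i, θb b i * matVec M (eb b) i = h (θb b))
    (hmass : ∑ a, θa a = ∑ b, θb b) :
    ∑ a, h (θa a) • ea a = ∑ b, h (θb b) • eb b :=
  statement11_general h hh M hM θa ea θb eb hea heb hca hcb hmass
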